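/- arXiv:1904.10304 — 3 statements merged into one kernel-verified Lean document; each statement's English description precedes it below -/
import Mathlib

section
/- Let c₁ = (√5 − 1)/2, c₂ = (−2 + √5 + i√(5 − 2√5))/2, c₃ = (−2 + √5 − i√(5 − 2√5))/2 in ℂ. Then c₂ + c₂c₃/(1 − c₁) = c₁ + c₁c₂ + c₁c₂²/(1 − c₁), i.e. the tip points satisfy φ(231̄) = φ(1221̄). -/
/-!
Clearing the denominator `1 - c₁`, the identity only needs `c₁² + c₁ = 1` and that `c₂, c₃` are
the roots of `z² - (2c₁ - 1) z + (2 - 3c₁)`: eliminating `c₃` through the root sum leaves a multiple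
of that quadratic evaluated at `c₂`.
-/

open Real Complex

theorem tip_identity_of_golden_vieta {K : Type*} [Field K] {c₁ c₂ c₃ : K}
    (hc₁ : c₁ ^ 2 + c₁ = 1) (hsum : c₂ + c₃ = 2 * c₁ - 1) (hprod : c₂ * c₃ = 2 - 3 * c₁) :
    c₂ + c₂ * c₃ / (1 - c₁) = c₁ + c₁ * c₂ + c₁ * c₂ ^ 2 / (1 - c₁) := by
  have hne : 1 - c₁ ≠ 0 := fun h ↦
    one_ne_zero (by linear_combination hc₁ + (c₁ + 2) * h : (1 : K) = 0)
  have key : c₂ * (1 - c₁) + c₂ * c₃ = c₁ * (1 - c₁) + c₁ * c₂ * (1 - c₁) + c₁ * c₂ ^ 2 := by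
    linear_combination -c₁ * c₂ * hsum + (1 + c₁) * hprod - (c₂ + 2) * hc₁
  field_simp
  linear_combination key

lemma two_mul_sqrt_five_le_five : 2 * √5 ≤ 5 := by
  nlinarith [sq_sqrt (show (0 : ℝ) ≤ 5 by norm_num), sqrt_nonneg 5]

/-- for the golden ternary tree parameters, `φ(231̄) = φ(1221̄)`. -/
theorem golden_tip_identification :
    let c₁ : ℂ := (Real.sqrt 5 - 1) / 2
    let c₂ : ℂ := (-2 + Real.sqrt 5 + Complex.I * Real.sqrt (5 - 2 * Real.sqrt 5)) / 2
    let c₃ : ℂ := (-2 + Real.sqrt 5 - Complex.I * Real.sqrt (5 - 2 * Real.sqrt 5)) / 2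
    c₂ + c₂ * c₃ / (1 - c₁) = c₁ + c₁ * c₂ + c₁ * c₂ ^ 2 / (1 - c₁) := by
  intro c₁ c₂ c₃
  have hs : ((√5 : ℝ) : ℂ) ^ 2 = 5 := by
    norm_cast
    exact sq_sqrt (by norm_num)
  have ht : ((√(5 - 2 * √5) : ℝ) : ℂ) ^ 2 = 5 - 2 * (√5 : ℝ) := by
    norm_cast
    exact sq_sqrt (sub_nonneg.mpr two_mul_sqrt_five_le_five)
  apply tip_identity_of_golden_vieta
  · linear_combination hs / 4
  · ring
  · linear_combination hs / 4 + ht / 4 - ((√(5 - 2 * √5) : ℝ) : ℂ) ^ 2 / 4 * I_sq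
end

section
/- Let z ∈ ℂ with z ≠ 0, z ≠ 1, and let c₂, c₃ ∈ ℂ with c₂ ≠ c₃ satisfy both equations c₂ + c₂c₃/(1 − z) = z + zc₂ + zc₂²/(1 − z) and c₃ + c₃c₂/(1 − z) = z + zc₃ + zc₃²/(1 − z). Then c₂ + c₃ = (1 − z)²/z and, if additionally z ≠ −1, c₂ c₃ = z(1 − z)/(1 + z). -/
/-! Clearing the denominator `1 - z`, each equation reads
`x (1 - z) + x y = z (1 - z) + z x (1 - z) + z x²` with `(x, y) = (c₂, c₃)` or `(c₃, c₂)`.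
The mixed term `x y` is symmetric, so the difference of the two equations is
`(c₂ - c₃) (z (c₂ + c₃) - (1 - z)²) = 0`, which gives the sum since `c₂ ≠ c₃`. Adding the
two equations and substituting the sum leaves `(1 + z) c₂ c₃ = z (1 - z)`. -/

section TipToTip

variable {K : Type*} [Field K] {z x y : K}

theorem tip_equation_mul_one_sub (hz : z ≠ 1)
    (h : x + x * y / (1 - z) = z + z * x + z * x ^ 2 / (1 - z)) :
    x * (1 - z) + x * y = z * (1 - z) + z * x * (1 - z) + z * x ^ 2 := by
  have hz' : 1 - z ≠ 0 := sub_ne_zero.mpr hz.symm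
  field_simp at h
  linear_combination h

theorem mul_add_eq_one_sub_sq_of_tip_equations (hne : x ≠ y)
    (hx : x * (1 - z) + x * y = z * (1 - z) + z * x * (1 - z) + z * x ^ 2)
    (hy : y * (1 - z) + y * x = z * (1 - z) + z * y * (1 - z) + z * y ^ 2) :
    z * (x + y) = (1 - z) ^ 2 := by
  have hfactor : (x - y) * (z * (x + y) - (1 - z) ^ 2) = 0 := by
    linear_combination hy - hx
  linear_combination (mul_eq_zero.mp hfactor).resolve_left (sub_ne_zero.mpr hne)

theorem one_add_mul_mul_eq_of_tip_equations [NeZero (2 : K)]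
    (hx : x * (1 - z) + x * y = z * (1 - z) + z * x * (1 - z) + z * x ^ 2)
    (hy : y * (1 - z) + y * x = z * (1 - z) + z * y * (1 - z) + z * y ^ 2)
    (hsum : z * (x + y) = (1 - z) ^ 2) :
    (1 + z) * (x * y) = z * (1 - z) := by
  refine mul_left_cancel₀ (two_ne_zero : (2 : K) ≠ 0) ?_
  linear_combination hx + hy + (x + y) * hsum

end TipToTip

/-- conversely, the tip-to-tip identification system forces the elementary
symmetric functions of `c₂, c₃`. -/
theorem system_gives_symm_functions (z c₂ c₃ : ℂ) (hz0 : z ≠ 0) (hz1 : z ≠ 1)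
    (hne : c₂ ≠ c₃)
    (h2 : c₂ + c₂ * c₃ / (1 - z) = z + z * c₂ + z * c₂ ^ 2 / (1 - z))
    (h3 : c₃ + c₃ * c₂ / (1 - z) = z + z * c₃ + z * c₃ ^ 2 / (1 - z)) :
    c₂ + c₃ = (1 - z) ^ 2 / z ∧ (z ≠ -1 → c₂ * c₃ = z * (1 - z) / (1 + z)) := by
  have h2' := tip_equation_mul_one_sub hz1 h2
  have h3' := tip_equation_mul_one_sub hz1 h3
  have hsum := mul_add_eq_one_sub_sq_of_tip_equations hne h2' h3'
  have hprod := one_add_mul_mul_eq_of_tip_equations h2' h3' hsum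
  refine ⟨eq_div_of_mul_eq hz0 (by linear_combination hsum), fun hz : z ≠ -1 => ?_⟩
  have hz' : 1 + z ≠ 0 := fun h => hz (by linear_combination h)
  exact eq_div_of_mul_eq hz' (by linear_combination hprod)
end

section
/- Let z = 1/2, c₂ = 1/4 + i√15/12, c₃ = 1/4 − i√15/12. Then 1 + c₂ + c₂c₃(1 + z + zc₃/(1 − z)) = 1 + z + zc₂ + zc₂² + zc₂³/(1 − z), i.e. the extra tip-to-tip equivalence φ(23131̄) = φ(12221̄) holds, witnessing that T_A(1/2) is an unstable tree. -/
theorem half_tree_extra_identification_of_vieta {K : Type*} [Field K] [CharZero K]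
    {c₂ c₃ : K} (hsum : c₂ + c₃ = 1 / 2) (hprod : c₂ * c₃ = 1 / 6) :
    1 + c₂ + c₂ * c₃ * (1 + 1 / 2 + 1 / 2 * c₃ / (1 - 1 / 2))
      = 1 + 1 / 2 + 1 / 2 * c₂ + 1 / 2 * c₂ ^ 2 + 1 / 2 * c₂ ^ 3 / (1 - 1 / 2) := by
  obtain rfl : c₃ = 1 / 2 - c₂ := by linear_combination hsum
  linear_combination 3 * hprod

/-- the extra tip-to-tip equivalence `φ(23131̄) = φ(12221̄)` for `T_A(1/2)`. -/
theorem half_tree_extra_identification :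
    let z : ℂ := 1 / 2
    let c₂ : ℂ := 1 / 4 + Complex.I * Real.sqrt 15 / 12
    let c₃ : ℂ := 1 / 4 - Complex.I * Real.sqrt 15 / 12
    1 + c₂ + c₂ * c₃ * (1 + z + z * c₃ / (1 - z))
      = 1 + z + z * c₂ + z * c₂ ^ 2 + z * c₂ ^ 3 / (1 - z) := by
  intro z c₂ c₃
  have sqrt15_sq : ((Real.sqrt 15 : ℝ) : ℂ) ^ 2 = 15 := by
    exact_mod_cast Real.sq_sqrt (by norm_num)
  refine half_tree_extra_identification_of_vieta (by ring) ?_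
  linear_combination (-1 / 144 : ℂ) * (Complex.I ^ 2 * sqrt15_sq + 15 * Complex.I_sq)
end
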